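/- If MPVC-MFCQ holds at a feasible point x* ∈ C, then MPVC-GMFCQ holds at x*. -/

import Mathlib

open Filter Topology
/-- The MPVC feasible set. -/
def feasSet {n m l q : ℕ} (g : Fin m → (Fin n → ℝ) → ℝ) (h : Fin l → (Fin n → ℝ) → ℝ)
    (G H : Fin q → (Fin n → ℝ) → ℝ) : Set (Fin n → ℝ) :=
  {x | (∀ i, g i x ≤ 0) ∧ (∀ j, h j x = 0) ∧ (∀ i, 0 ≤ H i x) ∧ (∀ i, G i x * H i x ≤ 0)}

/-- MPVC-MFCQ at a feasible point: the gradients `∇h_j (all j), ∇H_i (i ∈ I_{0+} ∪ I_{00})`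
are linearly independent and there is a direction `d` with
`∇h_jᵀd = 0`, `∇H_iᵀd = 0 (i ∈ I_{0+} ∪ I_{00})`, `∇g_iᵀd < 0 (i ∈ I_g)`,
`∇H_iᵀd > 0 (i ∈ I_{0-})`, `∇G_iᵀd < 0 (i ∈ I_{+0} ∪ I_{00})`. -/
def MPVC_MFCQ {n m l q : ℕ} (g : Fin m → (Fin n → ℝ) → ℝ) (h : Fin l → (Fin n → ℝ) → ℝ)
    (G H : Fin q → (Fin n → ℝ) → ℝ) (xs : Fin n → ℝ) : Prop :=
  LinearIndependent ℝ
    (fun idx : Fin l ⊕ {i : Fin q // H i xs = 0 ∧ 0 ≤ G i xs} =>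
      Sum.elim (fun j => fderiv ℝ (h j) xs) (fun i => fderiv ℝ (H i.1) xs) idx)
  ∧ ∃ d : Fin n → ℝ,
      (∀ j, fderiv ℝ (h j) xs d = 0)
      ∧ (∀ i : Fin q, H i xs = 0 ∧ 0 ≤ G i xs → fderiv ℝ (H i) xs d = 0)
      ∧ (∀ i : Fin m, g i xs = 0 → fderiv ℝ (g i) xs d < 0)
      ∧ (∀ i : Fin q, H i xs = 0 ∧ G i xs < 0 → 0 < fderiv ℝ (H i) xs d)
      ∧ (∀ i : Fin q, (0 < H i xs ∧ G i xs = 0) ∨ (H i xs = 0 ∧ G i xs = 0) →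
          fderiv ℝ (G i) xs d < 0)



/-- Conditions (i)–(ii) on an MPVC multiplier `(lam, mu, etaG, etaH)` at a feasible point. -/
def MultCond {n m l q : ℕ} (g : Fin m → (Fin n → ℝ) → ℝ) (h : Fin l → (Fin n → ℝ) → ℝ)
    (G H : Fin q → (Fin n → ℝ) → ℝ) (xs : Fin n → ℝ)
    (lam : Fin m → ℝ) (mu : Fin l → ℝ) (etaG etaH : Fin q → ℝ) : Prop :=
  ((∑ i, lam i • fderiv ℝ (g i) xs) + (∑ j, mu j • fderiv ℝ (h j) xs)
      + (∑ i, etaG i • fderiv ℝ (G i) xs) - (∑ i, etaH i • fderiv ℝ (H i) xs) = 0)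
  ∧ (∀ i, g i xs = 0 → 0 ≤ lam i)
  ∧ (∀ i, g i xs ≠ 0 → lam i = 0)
  ∧ (∀ i, (0 < H i xs ∧ G i xs < 0) ∨ (H i xs = 0 ∧ G i xs < 0) ∨ (H i xs = 0 ∧ 0 < G i xs) →
      etaG i = 0)
  ∧ (∀ i, (0 < H i xs ∧ G i xs = 0) ∨ (H i xs = 0 ∧ G i xs = 0) → 0 ≤ etaG i)
  ∧ (∀ i, 0 < H i xs → etaH i = 0)
  ∧ (∀ i, H i xs = 0 ∧ G i xs < 0 → 0 ≤ etaH i)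
  ∧ (∀ i, H i xs = 0 ∧ G i xs = 0 → etaH i * etaG i = 0)

/-- MPVC-GMFCQ at a feasible point: the only multiplier satisfying conditions (i)–(ii) is zero. -/
def MPVC_GMFCQ {n m l q : ℕ} (g : Fin m → (Fin n → ℝ) → ℝ) (h : Fin l → (Fin n → ℝ) → ℝ)
    (G H : Fin q → (Fin n → ℝ) → ℝ) (xs : Fin n → ℝ) : Prop :=
  ∀ (lam : Fin m → ℝ) (mu : Fin l → ℝ) (etaG etaH : Fin q → ℝ),
    MultCond g h G H xs lam mu etaG etaH → lam = 0 ∧ mu = 0 ∧ etaG = 0 ∧ etaH = 0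

/-! Apply the multiplier equation to the MFCQ direction `d`. The `h`-terms drop out and, by the
sign conditions on the multipliers and on `d`, each remaining term `λᵢ ∇gᵢᵀd`, `η^G_i ∇G_iᵀd`,
`-η^H_i ∇H_iᵀd` is nonpositive; as they sum to zero they all vanish. Where `d` gives a strict
inequality this forces the multiplier to vanish, which kills `λ`, `η^G`, and `η^H` off
`I_{0+} ∪ I_{00}`. What is left is a vanishing combination of the gradients that MFCQ assumes
linearly independent. -/

theorem LinearIndependent.eq_zero_of_sum_smul_eq_sum_smul {ι κ R M : Type*} [Fintype ι]
    [Fintype κ] [Ring R] [AddCommGroup M] [Module R M] {v : ι → M} {w : κ → M} {p : κ → Prop}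
    (hli : LinearIndependent R (Sum.elim v fun k : {k // p k} => w k)) {a : ι → R} {b : κ → R}
    (hb : ∀ k, ¬p k → b k = 0) (hsum : ∑ i, a i • v i = ∑ k, b k • w k) :
    a = 0 ∧ b = 0 := by
  classical
  have hsub : ∑ k : {k // p k}, b k • w k = ∑ k, b k • w k := by
    rw [← Fintype.sum_subtype_add_sum_subtype p, left_eq_add]
    exact Finset.sum_eq_zero fun k _ => by rw [hb k k.2, zero_smul]
  have hzero := Fintype.linearIndependent_iff.mp hli (Sum.elim a fun k => -b k)
    (by simp [Fintype.sum_sum_type, neg_smul, hsub, hsum])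
  refine ⟨funext fun i => hzero (.inl i), funext fun k => ?_⟩
  by_cases hk : p k
  · exact neg_eq_zero.mp (hzero (.inr ⟨k, hk⟩))
  · exact hb k hk

section MPVC

variable {n m l q : ℕ} {g : Fin m → (Fin n → ℝ) → ℝ} {h : Fin l → (Fin n → ℝ) → ℝ}
  {G H : Fin q → (Fin n → ℝ) → ℝ} {x d : Fin n → ℝ}
  {lam : Fin m → ℝ} {mu : Fin l → ℝ} {etaG etaH : Fin q → ℝ}

variable (g h G H) in
-- Verbatim the condition on `d` in `MPVC_MFCQ`, so that destructuring that hypothesis produces it.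
def IsMFCQDirection (x d : Fin n → ℝ) : Prop :=
  (∀ j, fderiv ℝ (h j) x d = 0)
  ∧ (∀ i : Fin q, H i x = 0 ∧ 0 ≤ G i x → fderiv ℝ (H i) x d = 0)
  ∧ (∀ i : Fin m, g i x = 0 → fderiv ℝ (g i) x d < 0)
  ∧ (∀ i : Fin q, H i x = 0 ∧ G i x < 0 → 0 < fderiv ℝ (H i) x d)
  ∧ (∀ i : Fin q, (0 < H i x ∧ G i x = 0) ∨ (H i x = 0 ∧ G i x = 0) → fderiv ℝ (G i) x d < 0)

namespace MultCond

variable (hc : MultCond g h G H x lam mu etaG etaH) (hd : IsMFCQDirection g h G H x d)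
include hc

theorem lam_eq_zero_or (i : Fin m) : lam i = 0 ∨ g i x = 0 :=
  or_iff_not_imp_right.mpr (hc.2.2.1 i)

theorem etaG_eq_zero_or (hx : x ∈ feasSet g h G H) (i : Fin q) :
    etaG i = 0 ∨ (0 < H i x ∧ G i x = 0) ∨ (H i x = 0 ∧ G i x = 0) := by
  obtain ⟨-, -, -, hG0, -⟩ := hc
  obtain ⟨-, -, hH, hGH⟩ := hx
  rcases (hH i).lt_or_eq with hHi | hHi <;> rcases lt_trichotomy (G i x) 0 with hGi | hGi | hGi
  · exact .inl (hG0 i (.inl ⟨hHi, hGi⟩))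
  · exact .inr (.inl ⟨hHi, hGi⟩)
  · nlinarith [hGH i]
  · exact .inl (hG0 i (.inr (.inl ⟨hHi.symm, hGi⟩)))
  · exact .inr (.inr ⟨hHi.symm, hGi⟩)
  · exact .inl (hG0 i (.inr (.inr ⟨hHi.symm, hGi⟩)))

theorem etaH_eq_zero_or (hx : x ∈ feasSet g h G H) (i : Fin q) :
    etaH i = 0 ∨ (H i x = 0 ∧ G i x < 0) ∨ (H i x = 0 ∧ 0 ≤ G i x) := by
  rcases (hx.2.2.1 i).lt_or_eq with hHi | hHi
  · exact .inl (hc.2.2.2.2.2.1 i hHi)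
  · exact .inr ((lt_or_ge (G i x) 0).imp (⟨hHi.symm, ·⟩) (⟨hHi.symm, ·⟩))

include hd

theorem lam_mul_nonpos (i : Fin m) : lam i * fderiv ℝ (g i) x d ≤ 0 := by
  rcases hc.lam_eq_zero_or i with h0 | hi
  · simp [h0]
  · exact mul_nonpos_of_nonneg_of_nonpos (hc.2.1 i hi) (hd.2.2.1 i hi).le

theorem lam_eq_zero_of_mul_eq_zero {i : Fin m} (h0 : lam i * fderiv ℝ (g i) x d = 0) :
    lam i = 0 :=
  (hc.lam_eq_zero_or i).elim id fun hi => (mul_eq_zero.mp h0).resolve_right (hd.2.2.1 i hi).ne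

theorem etaG_mul_nonpos (hx : x ∈ feasSet g h G H) (i : Fin q) :
    etaG i * fderiv ℝ (G i) x d ≤ 0 := by
  rcases hc.etaG_eq_zero_or hx i with h0 | hi
  · simp [h0]
  · exact mul_nonpos_of_nonneg_of_nonpos (hc.2.2.2.2.1 i hi) (hd.2.2.2.2 i hi).le

theorem etaG_eq_zero_of_mul_eq_zero (hx : x ∈ feasSet g h G H) {i : Fin q}
    (h0 : etaG i * fderiv ℝ (G i) x d = 0) : etaG i = 0 :=
  (hc.etaG_eq_zero_or hx i).elim id fun hi =>
    (mul_eq_zero.mp h0).resolve_right (hd.2.2.2.2 i hi).ne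

theorem etaH_mul_nonneg (hx : x ∈ feasSet g h G H) (i : Fin q) :
    0 ≤ etaH i * fderiv ℝ (H i) x d := by
  rcases hc.etaH_eq_zero_or hx i with h0 | hi | hi
  · simp [h0]
  · exact mul_nonneg (hc.2.2.2.2.2.2.1 i hi) (hd.2.2.2.1 i hi).le
  · simp [hd.2.1 i hi]

theorem etaH_eq_zero_of_mul_eq_zero (hx : x ∈ feasSet g h G H) {i : Fin q}
    (hi : ¬(H i x = 0 ∧ 0 ≤ G i x)) (h0 : etaH i * fderiv ℝ (H i) x d = 0) : etaH i = 0 := by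
  rcases hc.etaH_eq_zero_or hx i with h0' | hneg | hi'
  · exact h0'
  · exact (mul_eq_zero.mp h0).resolve_right (hd.2.2.2.1 i hneg).ne'
  · exact absurd hi' hi

theorem sum_mul_fderiv_apply_eq_zero :
    ∑ i, lam i * fderiv ℝ (g i) x d + ∑ i, etaG i * fderiv ℝ (G i) x d
      - ∑ i, etaH i * fderiv ℝ (H i) x d = 0 := by
  have := congrArg (fun L : (Fin n → ℝ) →L[ℝ] ℝ => L d) hc.1
  simpa [hd.1] using this

theorem mul_fderiv_apply_eq_zero (hx : x ∈ feasSet g h G H) :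
    (∀ i, lam i * fderiv ℝ (g i) x d = 0) ∧ (∀ i, etaG i * fderiv ℝ (G i) x d = 0)
      ∧ ∀ i, etaH i * fderiv ℝ (H i) x d = 0 := by
  have hg : ∀ i ∈ Finset.univ, lam i * fderiv ℝ (g i) x d ≤ 0 :=
    fun i _ => hc.lam_mul_nonpos hd i
  have hG : ∀ i ∈ Finset.univ, etaG i * fderiv ℝ (G i) x d ≤ 0 :=
    fun i _ => hc.etaG_mul_nonpos hd hx i
  have hH : ∀ i ∈ Finset.univ, 0 ≤ etaH i * fderiv ℝ (H i) x d :=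
    fun i _ => hc.etaH_mul_nonneg hd hx i
  have := hc.sum_mul_fderiv_apply_eq_zero hd
  have := Finset.sum_nonpos hg
  have := Finset.sum_nonpos hG
  have := Finset.sum_nonneg hH
  refine ⟨fun i => (Finset.sum_eq_zero_iff_of_nonpos hg).mp ?_ i (Finset.mem_univ i),
    fun i => (Finset.sum_eq_zero_iff_of_nonpos hG).mp ?_ i (Finset.mem_univ i),
    fun i => (Finset.sum_eq_zero_iff_of_nonneg hH).mp ?_ i (Finset.mem_univ i)⟩ <;> linarith

end MultCond

end MPVC

theorem GMFCQ_of_MFCQ_general {n m l q : ℕ}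
    (g : Fin m → (Fin n → ℝ) → ℝ) (h : Fin l → (Fin n → ℝ) → ℝ)
    (G H : Fin q → (Fin n → ℝ) → ℝ)
    (xs : Fin n → ℝ) (hxs : xs ∈ feasSet g h G H)
    (hmfcq : MPVC_MFCQ g h G H xs) :
    MPVC_GMFCQ g h G H xs := by
  obtain ⟨hli, d, hd⟩ := hmfcq
  intro lam mu etaG etaH hc
  obtain ⟨hg0, hG0, hH0⟩ := hc.mul_fderiv_apply_eq_zero hd hxs
  have hlam : lam = 0 := funext fun i => hc.lam_eq_zero_of_mul_eq_zero hd (hg0 i)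
  have hetaG : etaG = 0 := funext fun i => hc.etaG_eq_zero_of_mul_eq_zero hd hxs (hG0 i)
  have hred : ∑ j, mu j • fderiv ℝ (h j) xs = ∑ i, etaH i • fderiv ℝ (H i) xs := by
    simpa [hlam, hetaG, sub_eq_zero] using hc.1
  obtain ⟨hmu, hetaH⟩ := hli.eq_zero_of_sum_smul_eq_sum_smul (w := fun i => fderiv ℝ (H i) xs)
    (fun i hi => hc.etaH_eq_zero_of_mul_eq_zero hd hxs hi (hH0 i)) hred
  exact ⟨hlam, hmu, hetaG, hetaH⟩

/-- MPVC-MFCQ at a feasible point implies MPVC-GMFCQ there. -/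
theorem GMFCQ_of_MFCQ {n m l q : ℕ}
    (g : Fin m → (Fin n → ℝ) → ℝ) (h : Fin l → (Fin n → ℝ) → ℝ)
    (G H : Fin q → (Fin n → ℝ) → ℝ)
    (hg : ∀ i, ContDiff ℝ 1 (g i)) (hh : ∀ j, ContDiff ℝ 1 (h j))
    (hG : ∀ i, ContDiff ℝ 1 (G i)) (hH : ∀ i, ContDiff ℝ 1 (H i))
    (xs : Fin n → ℝ) (hxs : xs ∈ feasSet g h G H)
    (hmfcq : MPVC_MFCQ g h G H xs) :
    MPVC_GMFCQ g h G H xs :=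
  GMFCQ_of_MFCQ_general g h G H xs hxs hmfcq
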